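/- arXiv:2112.04164 — 2 statements merged into one kernel-verified Lean document; each statement's English description precedes it below -/
import Mathlib

section
/- Let I, A, B, I', A', B' be (possibly non-unital) C*-algebras, and let ι : I → A, q : A → B, ι' : I' → A', q' : A' → B' be *-homomorphisms forming the rows of a commutative diagram, with vertical *-homomorphisms φ_I : I → I', φ_A : A → A', φ_B : B → B' (so φ_A ∘ ι = ι' ∘ φ_I and φ_B ∘ q = q' ∘ φ_A). Assume: (i) ι is injective and its range is a closed two-sided ideal of A; (ii) the lower row is exact, i.e. ι' is injective, the range of ι' equals the kernel of q', and q' is surjective; (iii) φ_I, φ_A, φ_B are injective; and (iv) φ_I is non-degenerate, i.e. the closed linear span of {φ_I(x)·y : x ∈ I, y ∈ I'} is all of I'. Then the kernel of q is contained in the range of ι. -/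
/-!
By exactness of the lower row, `a ∈ ker q` gives `φ_A a = ι' c` with `c ∈ I'`. Non-degeneracy
of `φ_I` makes the image under `φ_I` of an approximate unit `(e)` of `I` a left approximate unit
for `I'`, so `φ_I e * c → c`. Since `ι(I)` is a right ideal, `ι e * a = ι w_e` for some `w_e ∈ I`,
and `φ_A (ι w_e) = ι' (φ_I e * c) → ι' c = φ_A a`. As `φ_A` is isometric, `ι w_e → a`, and `ι(I)`
is closed.
-/

open Filter Topology Metric Set
open scoped CStarAlgebra

theorem CStarAlgebra.exists_tendsto_mul_right_closedBall (J : Type*) [NonUnitalCStarAlgebra J] :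
    ∃ l : Filter (closedBall (0 : J) 1), l.NeBot ∧
      ∀ x : J, Tendsto (fun e : closedBall (0 : J) 1 ↦ (e : J) * x) l (𝓝 x) := by
  -- `approximateUnit` is defined with respect to the spectral order, which is not an instance.
  let := CStarAlgebra.spectralOrder J
  let := CStarAlgebra.spectralOrderedRing J
  have hl := CStarAlgebra.increasingApproximateUnit (A := J)
  have hball : range ((↑) : closedBall (0 : J) 1 → J) ∈ approximateUnit J := by
    rw [Subtype.range_coe]; exact hl.closedBall_mem
  have := hl.neBot
  exact ⟨comap ((↑) : closedBall (0 : J) 1 → J) (approximateUnit J), this.comap_of_range_mem hball,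
    fun x ↦ (tendsto_comap'_iff hball).mpr (hl.tendsto_mul_right x)⟩

theorem lipschitzWith_one_mul_left_of_norm_le_one {R : Type*} [NonUnitalSeminormedRing R]
    {a : R} (ha : ‖a‖ ≤ 1) : LipschitzWith 1 (a * ·) :=
  LipschitzWith.of_dist_le_mul fun x y ↦ by
    rw [dist_eq_norm, dist_eq_norm, ← mul_sub, NNReal.coe_one, one_mul]
    exact (norm_mul_le a _).trans (mul_le_of_le_one_left (norm_nonneg _) ha)

theorem NonUnitalStarAlgHom.tendsto_apply_mul_of_dense_span {I I' : Type*}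
    [NonUnitalCStarAlgebra I] [NonUnitalCStarAlgebra I'] (φ : I →⋆ₙₐ[ℂ] I')
    (hφ : closure (Submodule.span ℂ {z : I' | ∃ (x : I) (y : I'), z = φ x * y} : Set I') = univ)
    {l : Filter (closedBall (0 : I) 1)}
    (hl : ∀ x : I, Tendsto (fun e : closedBall (0 : I) 1 ↦ (e : I) * x) l (𝓝 x))
    (c : I') : Tendsto (fun e : closedBall (0 : I) 1 ↦ φ e * c) l (𝓝 c) := by
  let S : Submodule ℂ I' :=
    { carrier := {c | Tendsto (fun e : closedBall (0 : I) 1 ↦ φ e * c) l (𝓝 c)}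
      add_mem' := fun hc hd ↦ by simpa only [mem_ofPred_eq, mul_add] using hc.add hd
      zero_mem' := by simpa only [mem_ofPred_eq, mul_zero] using tendsto_const_nhds
      smul_mem' := fun a c hc ↦ by
        simpa only [mem_ofPred_eq, mul_smul_comm] using hc.const_smul a }
  have hgen : {z : I' | ∃ (x : I) (y : I'), z = φ x * y} ⊆ S := by
    rintro _ ⟨x, y, rfl⟩
    change Tendsto _ l _
    have := ((map_continuous φ).tendsto x).comp (hl x)
    simpa only [Function.comp_def, map_mul, mul_assoc] using this.mul_const y
  -- The multipliers `φ e` all have norm at most one, so their convergence set is closed.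
  have hS : IsClosed (S : Set I') := by
    refine Equicontinuous.isClosed_setOfPred_tendsto (f := id) ?_ continuous_id
    refine (LipschitzWith.uniformEquicontinuous _ 1 fun e ↦ ?_).equicontinuous
    refine lipschitzWith_one_mul_left_of_norm_le_one ?_
    exact (NonUnitalStarAlgHom.norm_apply_le φ (e : I)).trans (mem_closedBall_zero_iff.mp e.2)
  have hspan : (Submodule.span ℂ {z : I' | ∃ (x : I) (y : I'), z = φ x * y} : Set I') ⊆ S :=
    Submodule.span_le.mpr hgen
  exact closure_minimal hspan hS (hφ ▸ mem_univ c)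

theorem ker_subset_range_of_nondegenerate_embedding_into_exact_row_general
    {I A B I' A' B' : Type*}
    [NonUnitalCStarAlgebra I] [NonUnitalCStarAlgebra A] [NonUnitalCStarAlgebra B]
    [NonUnitalCStarAlgebra I'] [NonUnitalCStarAlgebra A'] [NonUnitalCStarAlgebra B']
    (ι : I →⋆ₙₐ[ℂ] A) (q : A →⋆ₙₐ[ℂ] B)
    (ι' : I' →⋆ₙₐ[ℂ] A') (q' : A' →⋆ₙₐ[ℂ] B')
    (φI : I →⋆ₙₐ[ℂ] I') (φA : A →⋆ₙₐ[ℂ] A') (φB : B →⋆ₙₐ[ℂ] B')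
    -- commutativity of the diagram
    (hcomm₁ : ∀ x : I, φA (ι x) = ι' (φI x))
    (hcomm₂ : ∀ a : A, φB (q a) = q' (φA a))
    -- (i) ι is injective and its range is a closed two-sided ideal of A
    (hι_closed : IsClosed (Set.range ι))
    (hι_ideal : ∀ x ∈ Set.range ι, ∀ a : A,
      a * x ∈ Set.range ι ∧ x * a ∈ Set.range ι)
    -- (ii) the lower row is exact
    (hexact' : Set.range ι' = {a : A' | q' a = 0})
    -- (iii) the vertical maps are injective
    (hφA_inj : Function.Injective φA)
    -- (iv) φ_I is non-degenerate
    (hnondeg : closure (Submodule.span ℂ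
      {z : I' | ∃ (x : I) (y : I'), z = φI x * y} : Set I') = Set.univ) :
    ∀ a : A, q a = 0 → a ∈ Set.range ι := by
  intro a ha
  obtain ⟨c, hc⟩ : φA a ∈ range ι' := by
    rw [hexact', mem_ofPred_eq, ← hcomm₂, ha, map_zero]
  have hright : ∀ e : I, ∃ w : I, ι w = ι e * a := fun e ↦ (hι_ideal _ ⟨e, rfl⟩ a).2
  choose w hw using hright
  obtain ⟨l, hl_neBot, hl⟩ := CStarAlgebra.exists_tendsto_mul_right_closedBall I
  have himage : ∀ e : I, φA (ι (w e)) = ι' (φI e * c) := fun e ↦ by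
    rw [hw, map_mul, hcomm₁, ← hc, map_mul]
  have hlim : Tendsto (fun e : closedBall (0 : I) 1 ↦ ι (w e)) l (𝓝 a) := by
    rw [(NonUnitalStarAlgHom.isometry φA hφA_inj).isEmbedding.tendsto_nhds_iff, ← hc]
    simpa only [Function.comp_def, himage] using
      ((map_continuous ι').tendsto c).comp (φI.tendsto_apply_mul_of_dense_span hnondeg hl c)
  exact hι_closed.mem_of_tendsto hlim (Eventually.of_forall fun e ↦ mem_range_self _)

/-- **Lemma 3.1** (folklore). Given a commutative diagram of C*-algebras and
*-homomorphisms whose rows are `0 → I → A → B → 0` and `0 → I' → A' → B' → 0`,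
where `ι : I → A` is injective with closed two-sided ideal range, the lower row is
exact, the vertical maps `φ_I, φ_A, φ_B` are injective, and `φ_I` is non-degenerate
(the closed linear span of `{φ_I(x) * y}` is all of `I'`), then `ker q ⊆ range ι`. -/
theorem ker_subset_range_of_nondegenerate_embedding_into_exact_row
    {I A B I' A' B' : Type*}
    [NonUnitalCStarAlgebra I] [NonUnitalCStarAlgebra A] [NonUnitalCStarAlgebra B]
    [NonUnitalCStarAlgebra I'] [NonUnitalCStarAlgebra A'] [NonUnitalCStarAlgebra B']
    (ι : I →⋆ₙₐ[ℂ] A) (q : A →⋆ₙₐ[ℂ] B)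
    (ι' : I' →⋆ₙₐ[ℂ] A') (q' : A' →⋆ₙₐ[ℂ] B')
    (φI : I →⋆ₙₐ[ℂ] I') (φA : A →⋆ₙₐ[ℂ] A') (φB : B →⋆ₙₐ[ℂ] B')
    -- commutativity of the diagram
    (hcomm₁ : ∀ x : I, φA (ι x) = ι' (φI x))
    (hcomm₂ : ∀ a : A, φB (q a) = q' (φA a))
    -- (i) ι is injective and its range is a closed two-sided ideal of A
    (hι_inj : Function.Injective ι)
    (hι_closed : IsClosed (Set.range ι))
    (hι_ideal : ∀ x ∈ Set.range ι, ∀ a : A,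
      a * x ∈ Set.range ι ∧ x * a ∈ Set.range ι)
    -- (ii) the lower row is exact
    (hι'_inj : Function.Injective ι')
    (hexact' : Set.range ι' = {a : A' | q' a = 0})
    (hq'_surj : Function.Surjective q')
    -- (iii) the vertical maps are injective
    (hφI_inj : Function.Injective φI)
    (hφA_inj : Function.Injective φA)
    (hφB_inj : Function.Injective φB)
    -- (iv) φ_I is non-degenerate
    (hnondeg : closure (Submodule.span ℂ
      {z : I' | ∃ (x : I) (y : I'), z = φI x * y} : Set I') = Set.univ) :
    ∀ a : A, q a = 0 → a ∈ Set.range ι :=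
  ker_subset_range_of_nondegenerate_embedding_into_exact_row_general ι q ι' q' φI φA φB hcomm₁
    hcomm₂ hι_closed hι_ideal hexact' hφA_inj hnondeg
end

section
/- Let I, A, B, I', A', B' be (possibly non-unital) C*-algebras, and let ι : I → A, q : A → B, ι' : I' → A', q' : A' → B' be *-homomorphisms forming the rows of a commutative diagram, with vertical *-homomorphisms φ_I : I → I', φ_A : A → A', φ_B : B → B' (so φ_A ∘ ι = ι' ∘ φ_I and φ_B ∘ q = q' ∘ φ_A). Assume: (i) ι is injective, its range is a closed two-sided ideal of A, q is surjective, and q ∘ ι = 0; (ii) the lower row is exact, i.e. ι' is injective, the range of ι' equals the kernel of q', and q' is surjective; (iii) φ_I, φ_A, φ_B are injective; and (iv) φ_I is non-degenerate, i.e. the closed linear span of {φ_I(x)·y : x ∈ I, y ∈ I'} is all of I'. Then the upper row 0 → I → A → B → 0 is exact: ι is injective, the range of ι equals the kernel of q, and q is surjective. -/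
/-!
Let `a ∈ ker q`. By exactness of the lower row, `φ_A a = ι' y` for some `y ∈ I'`. Along a bounded
approximate unit `e` of `I`, the `y` with `φ_I(e) y → y` form a closed subspace (left
multiplications by contractions are equicontinuous) containing every `φ_I(x) z`; by
non-degeneracy of `φ_I` this is all of `I'`. Hence
`φ_A(ι(e) a) = ι'(φ_I(e) y) → ι' y = φ_A a`. As `φ_A` is an injective *-homomorphism of
C*-algebras, it is isometric, so `ι(e) a → a`. The elements `ι(e) a` lie in the ideal `range ι`,
which is closed, so `a ∈ range ι`.
-/

open Filter Topology Metric
open scoped CStarAlgebra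

lemma CStarAlgebra.exists_isApproximateUnit_closedBall_mem (A : Type*) [NonUnitalCStarAlgebra A] :
    ∃ l : Filter A, l.IsApproximateUnit ∧ closedBall 0 1 ∈ l := by
  let _ := CStarAlgebra.spectralOrder A
  have _ := CStarAlgebra.spectralOrderedRing A
  exact ⟨_, (increasingApproximateUnit A).toIsApproximateUnit,
    (increasingApproximateUnit A).closedBall_mem⟩

lemma isClosed_setOf_tendsto_mul_left {ι R : Type*} [NonUnitalSeminormedRing R]
    {l : Filter ι} {u : ι → R} (hu : ∀ᶠ i in l, ‖u i‖ ≤ 1) :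
    IsClosed {y : R | Tendsto (fun i ↦ u i * y) l (𝓝 y)} := by
  let s := {i | ‖u i‖ ≤ 1}
  have hl : map (↑) (comap ((↑) : s → ι) l) = l := map_comap_of_mem (by rwa [Subtype.range_coe])
  have hlip : ∀ i : s, LipschitzWith 1 (fun y : R ↦ u i * y) := fun i ↦
    LipschitzWith.of_dist_le_mul fun y z ↦ by
      simpa [dist_eq_norm, ← mul_sub] using
        (norm_mul_le _ _).trans (mul_le_mul_of_nonneg_right i.2 (norm_nonneg _))
  convert (LipschitzWith.uniformEquicontinuous _ 1 hlip).equicontinuous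
    |>.isClosed_setOfPred_tendsto (l := comap (↑) l) continuous_id using 3
  conv_lhs => rw [← hl]
  exact tendsto_map'_iff

section Nondegenerate

variable {I I' : Type*} [NonUnitalCStarAlgebra I] [NonUnitalCStarAlgebra I']

lemma tendsto_map_mul_of_dense_span (φ : I →⋆ₙₐ[ℂ] I')
    (hφ : Dense (Submodule.span ℂ {z : I' | ∃ (x : I) (y : I'), z = φ x * y} : Set I'))
    {l : Filter I} (hl : l.IsApproximateUnit) (hl₁ : closedBall 0 1 ∈ l) (y : I') :
    Tendsto (fun e ↦ φ e * y) l (𝓝 y) := by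
  have hclosed : IsClosed {y : I' | Tendsto (fun e ↦ φ e * y) l (𝓝 y)} :=
    isClosed_setOf_tendsto_mul_left <| mem_of_superset hl₁ fun e he ↦
      (NonUnitalStarAlgHom.norm_apply_le φ e).trans (mem_closedBall_zero_iff.mp he)
  refine hclosed.closure_subset_iff.mpr (fun z hz ↦ ?_) (hφ y)
  simp only [Set.mem_ofPred_eq]
  induction hz using Submodule.span_induction with
  | mem z hz =>
    obtain ⟨x, w, rfl⟩ := hz
    have hcont : Continuous fun v : I ↦ φ v * w := by fun_prop
    simp only [← mul_assoc, ← map_mul]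
    exact (hcont.tendsto x).comp (hl.tendsto_mul_right x)
  | zero => simpa using tendsto_const_nhds
  | add z w _ _ hz hw => simpa only [mul_add] using hz.add hw
  | smul c z _ hz => simpa only [mul_smul_comm] using hz.const_smul c

lemma tendsto_mul_of_map_eq_map {A A' : Type*} [NonUnitalCStarAlgebra A] [NonUnitalCStarAlgebra A']
    (ι : I →⋆ₙₐ[ℂ] A) (ι' : I' →⋆ₙₐ[ℂ] A') (φI : I →⋆ₙₐ[ℂ] I') (φA : A →⋆ₙₐ[ℂ] A')
    (hcomm : ∀ x, φA (ι x) = ι' (φI x)) (hφA : Function.Injective φA)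
    (hφI : Dense (Submodule.span ℂ {z : I' | ∃ (x : I) (y : I'), z = φI x * y} : Set I'))
    {l : Filter I} (hl : l.IsApproximateUnit) (hl₁ : closedBall 0 1 ∈ l)
    {a : A} {y : I'} (hy : φA a = ι' y) :
    Tendsto (fun e ↦ ι e * a) l (𝓝 a) := by
  have hmap : ∀ e, φA (ι e * a) = ι' (φI e * y) := fun e ↦ by rw [map_mul, hcomm, hy, map_mul]
  rw [(NonUnitalStarAlgHom.isometry φA hφA).isEmbedding.tendsto_nhds_iff, Function.comp_def]
  simp only [hmap, hy]
  exact ((map_continuous ι').tendsto y).comp (tendsto_map_mul_of_dense_span φI hφI hl hl₁ y)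

end Nondegenerate

theorem exact_of_nondegenerate_embedding_into_exact_row_general
    {I A B I' A' B' : Type*}
    [NonUnitalCStarAlgebra I] [NonUnitalCStarAlgebra A] [NonUnitalCStarAlgebra B]
    [NonUnitalCStarAlgebra I'] [NonUnitalCStarAlgebra A'] [NonUnitalCStarAlgebra B']
    (ι : I →⋆ₙₐ[ℂ] A) (q : A →⋆ₙₐ[ℂ] B)
    (ι' : I' →⋆ₙₐ[ℂ] A') (q' : A' →⋆ₙₐ[ℂ] B')
    (φI : I →⋆ₙₐ[ℂ] I') (φA : A →⋆ₙₐ[ℂ] A') (φB : B →⋆ₙₐ[ℂ] B')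
    -- commutativity of the diagram
    (hcomm₁ : ∀ x : I, φA (ι x) = ι' (φI x))
    (hcomm₂ : ∀ a : A, φB (q a) = q' (φA a))
    -- (i) ι is injective with closed two-sided ideal range, q is surjective, q ∘ ι = 0
    (hι_inj : Function.Injective ι)
    (hι_closed : IsClosed (Set.range ι))
    (hι_ideal : ∀ x ∈ Set.range ι, ∀ a : A,
      a * x ∈ Set.range ι ∧ x * a ∈ Set.range ι)
    (hq_surj : Function.Surjective q)
    (hqι : ∀ x : I, q (ι x) = 0)
    -- (ii) the lower row is exact
    (hexact' : Set.range ι' = {a : A' | q' a = 0})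
    -- (iii) the vertical maps are injective
    (hφA_inj : Function.Injective φA)
    -- (iv) φ_I is non-degenerate
    (hnondeg : closure (Submodule.span ℂ
      {z : I' | ∃ (x : I) (y : I'), z = φI x * y} : Set I') = Set.univ) :
    -- the upper row is exact
    Function.Injective ι ∧ Set.range ι = {a : A | q a = 0} ∧
      Function.Surjective q := by
  refine ⟨hι_inj, subset_antisymm ?_ ?_, hq_surj⟩
  · rintro _ ⟨x, rfl⟩
    exact hqι x
  · intro a (ha : q a = 0)
    obtain ⟨y, hy⟩ : φA a ∈ Set.range ι' := by
      rw [hexact', Set.mem_ofPred_eq, ← hcomm₂, ha, map_zero]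
    obtain ⟨l, hl, hl₁⟩ := CStarAlgebra.exists_isApproximateUnit_closedBall_mem I
    have := hl.neBot
    have hlim : Tendsto (fun e ↦ ι e * a) l (𝓝 a) :=
      tendsto_mul_of_map_eq_map ι ι' φI φA hcomm₁ hφA_inj (dense_iff_closure_eq.mpr hnondeg)
        hl hl₁ hy.symm
    exact hι_closed.mem_of_tendsto hlim (.of_forall fun e ↦ (hι_ideal _ ⟨e, rfl⟩ a).2)

/-- Given a commutative diagram of C*-algebras and *-homomorphisms whose rows are
`0 → I → A → B → 0` and `0 → I' → A' → B' → 0`, where `ι` is injective with closed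
two-sided ideal range, `q` is surjective with `q ∘ ι = 0`, the lower row is exact,
the vertical maps are injective, and `φ_I` is non-degenerate, the upper row is exact:
`ι` is injective, `range ι = ker q`, and `q` is surjective. -/
theorem exact_of_nondegenerate_embedding_into_exact_row
    {I A B I' A' B' : Type*}
    [NonUnitalCStarAlgebra I] [NonUnitalCStarAlgebra A] [NonUnitalCStarAlgebra B]
    [NonUnitalCStarAlgebra I'] [NonUnitalCStarAlgebra A'] [NonUnitalCStarAlgebra B']
    (ι : I →⋆ₙₐ[ℂ] A) (q : A →⋆ₙₐ[ℂ] B)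
    (ι' : I' →⋆ₙₐ[ℂ] A') (q' : A' →⋆ₙₐ[ℂ] B')
    (φI : I →⋆ₙₐ[ℂ] I') (φA : A →⋆ₙₐ[ℂ] A') (φB : B →⋆ₙₐ[ℂ] B')
    -- commutativity of the diagram
    (hcomm₁ : ∀ x : I, φA (ι x) = ι' (φI x))
    (hcomm₂ : ∀ a : A, φB (q a) = q' (φA a))
    -- (i) ι is injective with closed two-sided ideal range, q is surjective, q ∘ ι = 0
    (hι_inj : Function.Injective ι)
    (hι_closed : IsClosed (Set.range ι))
    (hι_ideal : ∀ x ∈ Set.range ι, ∀ a : A,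
      a * x ∈ Set.range ι ∧ x * a ∈ Set.range ι)
    (hq_surj : Function.Surjective q)
    (hqι : ∀ x : I, q (ι x) = 0)
    -- (ii) the lower row is exact
    (hι'_inj : Function.Injective ι')
    (hexact' : Set.range ι' = {a : A' | q' a = 0})
    (hq'_surj : Function.Surjective q')
    -- (iii) the vertical maps are injective
    (hφI_inj : Function.Injective φI)
    (hφA_inj : Function.Injective φA)
    (hφB_inj : Function.Injective φB)
    -- (iv) φ_I is non-degenerate
    (hnondeg : closure (Submodule.span ℂ
      {z : I' | ∃ (x : I) (y : I'), z = φI x * y} : Set I') = Set.univ) :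
    -- the upper row is exact
    Function.Injective ι ∧ Set.range ι = {a : A | q a = 0} ∧
      Function.Surjective q :=
  exact_of_nondegenerate_embedding_into_exact_row_general ι q ι' q' φI φA φB hcomm₁ hcomm₂ hι_inj
    hι_closed hι_ideal hq_surj hqι hexact' hφA_inj hnondeg
end
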